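/- The over-and-above choice rule is size monotonic (satisfies the law of aggregate demand): for every individual i ∈ I and every set A ⊆ I \ {i}, the number of chosen individuals satisfies |C^OA(A)| ≤ |C^OA(A ∪ {i})|. -/

import Mathlib

/-!
The rank `#{j ∈ A | x < j}` maps `A` bijectively onto `{0, …, |A| - 1}`, so every component
of the rule chooses `min (capacity, size of its pool)` applicants. Enlarging the applicant set
enlarges the acceptable pool, hence the open selection, and it also enlarges the set of
acceptable applicants rejected by the open category (whoever is outranked by `qo` applicants
in the smaller set still is in the larger one), hence every reserve pool. The components are
disjoint, so the number chosen is a sum of nondecreasing terms.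
-/

open Finset

variable {α : Type*} [Fintype α] [DecidableEq α] [LinearOrder α]
variable {ρ : Type*} [Fintype ρ] [DecidableEq ρ]

/-- The top-`k` elements of `A` under the linear (merit) order on `α`, where
higher means more meritorious: the members of `A` that have fewer than `k`
strictly higher-ranked elements in `A`.  If `|A| ≤ k` this is all of `A`. -/
def topk (k : ℕ) (A : Finset α) : Finset α :=
  A.filter fun i => (A.filter fun j => i < j).card < k

/-- Open-category selection of the over-and-above choice rule: the
`min(qo, |A ∩ acc|)` highest-ranked acceptable applicants. -/
def oaOpen (acc : Finset α) (qo : ℕ) (A : Finset α) : Finset α :=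
  topk qo (A ∩ acc)

/-- Reserve-category-`r` selection of the over-and-above choice rule: the
`q r` highest-ranked acceptable type-`r` applicants not selected for the
open category. -/
def oaRes (acc : Finset α) (t : α → Option ρ) (qo : ℕ) (q : ρ → ℕ) (r : ρ)
    (A : Finset α) : Finset α :=
  topk (q r) (((A ∩ acc) \ oaOpen acc qo A).filter fun i => t i = some r)

/-- The set of applicants chosen by the over-and-above choice rule. -/
def oaChosen (acc : Finset α) (t : α → Option ρ) (qo : ℕ) (q : ρ → ℕ)
    (A : Finset α) : Finset α :=
  oaOpen acc qo A ∪ Finset.univ.biUnion fun r => oaRes acc t qo q r A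

section Rank

variable {β : Type*} [LinearOrder β]

lemma topk_subset (k : ℕ) (A : Finset β) : topk k A ⊆ A := filter_subset _ _

lemma card_filter_gt_lt_card {A : Finset β} {x : β} (hx : x ∈ A) :
    (A.filter (x < ·)).card < A.card :=
  card_lt_card (filter_ssubset.2 ⟨x, hx, lt_irrefl x⟩)

lemma strictAntiOn_card_filter_gt (A : Finset β) :
    StrictAntiOn (fun x => (A.filter (x < ·)).card) A := by
  intro x _ y hy hxy
  refine card_lt_card ⟨fun z hz => ?_, fun hsub => ?_⟩
  · simp only [mem_filter] at hz ⊢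
    exact ⟨hz.1, hxy.trans hz.2⟩
  · exact lt_irrefl y (mem_filter.1 (hsub (mem_filter.2 ⟨hy, hxy⟩))).2

lemma image_card_filter_gt [DecidableEq β] (A : Finset β) :
    A.image (fun x => (A.filter (x < ·)).card) = range A.card := by
  refine eq_of_subset_of_card_le (fun n hn => ?_) ?_
  · obtain ⟨x, hx, rfl⟩ := mem_image.1 hn
    exact mem_range.2 (card_filter_gt_lt_card hx)
  · rw [card_range, card_image_of_injOn (strictAntiOn_card_filter_gt A).injOn]

lemma card_topk (k : ℕ) (A : Finset β) : (topk k A).card = min k A.card := by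
  classical
  have hinj := (strictAntiOn_card_filter_gt A).injOn.mono (topk_subset k A)
  rw [← card_image_of_injOn hinj, topk, ← filter_image (p := (· < k)), image_card_filter_gt]
  calc ((range A.card).filter (· < k)).card = (range (min k A.card)).card := by
        congr 1; ext n; simp only [mem_filter, mem_range]; omega
    _ = min k A.card := card_range _

lemma sdiff_topk_subset_sdiff_topk [DecidableEq β] (k : ℕ) {A B : Finset β} (h : A ⊆ B) :
    A \ topk k A ⊆ B \ topk k B := by
  intro x hx
  obtain ⟨hxA, hxt⟩ := mem_sdiff.1 hx
  refine mem_sdiff.2 ⟨h hxA, fun hxB => hxt ?_⟩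
  rw [topk, mem_filter] at hxB ⊢
  exact ⟨hxA, (card_le_card (filter_subset_filter _ h)).trans_lt hxB.2⟩

end Rank

section OverAndAbove

omit [Fintype α]

variable (acc : Finset α) (t : α → Option ρ) (qo : ℕ) (q : ρ → ℕ)

section Components

omit [Fintype ρ]

lemma type_eq_of_mem_oaRes {r : ρ} {A : Finset α} {x : α} (hx : x ∈ oaRes acc t qo q r A) :
    t x = some r :=
  (mem_filter.1 (topk_subset _ _ hx)).2

lemma notMem_oaOpen_of_mem_oaRes {r : ρ} {A : Finset α} {x : α}
    (hx : x ∈ oaRes acc t qo q r A) : x ∉ oaOpen acc qo A :=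
  (mem_sdiff.1 (mem_filter.1 (topk_subset _ _ hx)).1).2

variable {A B : Finset α}

lemma card_oaOpen_le (h : A ⊆ B) : (oaOpen acc qo A).card ≤ (oaOpen acc qo B).card := by
  rw [oaOpen, oaOpen, card_topk, card_topk]
  exact min_le_min_left _ (card_le_card (inter_subset_inter_right h))

lemma card_oaRes_le (r : ρ) (h : A ⊆ B) :
    (oaRes acc t qo q r A).card ≤ (oaRes acc t qo q r B).card := by
  rw [oaRes, oaRes, card_topk, card_topk]
  exact min_le_min_left _ (card_le_card (filter_subset_filter _
    (sdiff_topk_subset_sdiff_topk qo (inter_subset_inter_right h))))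

end Components

lemma card_oaChosen (A : Finset α) :
    (oaChosen acc t qo q A).card
      = (oaOpen acc qo A).card + ∑ r, (oaRes acc t qo q r A).card := by
  rw [oaChosen, card_union_of_disjoint, card_biUnion]
  · intro r _ s _ hrs
    refine disjoint_left.2 fun x hxr hxs => hrs ?_
    exact Option.some_injective _
      ((type_eq_of_mem_oaRes acc t qo q hxr).symm.trans (type_eq_of_mem_oaRes acc t qo q hxs))
  · refine disjoint_left.2 fun x hx hxRes => ?_
    obtain ⟨r, _, hxr⟩ := mem_biUnion.1 hxRes
    exact notMem_oaOpen_of_mem_oaRes acc t qo q hxr hx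

lemma card_oaChosen_le {A B : Finset α} (h : A ⊆ B) :
    (oaChosen acc t qo q A).card ≤ (oaChosen acc t qo q B).card := by
  rw [card_oaChosen, card_oaChosen]
  exact add_le_add (card_oaOpen_le acc qo h)
    (sum_le_sum fun r _ => card_oaRes_le acc t qo q r h)

end OverAndAbove

theorem oa_size_monotonic_general
    (acc : Finset α) (t : α → Option ρ) (qo : ℕ) (q : ρ → ℕ)
    (i : α) (A : Finset α) :
    (oaChosen acc t qo q A).card ≤ (oaChosen acc t qo q (insert i A)).card :=
  card_oaChosen_le acc t qo q (subset_insert i A)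

/-- The over-and-above choice rule is size monotonic (law of
aggregate demand): adding an individual to the set of applicants weakly
increases the number of chosen individuals. -/
theorem oa_size_monotonic
    (acc : Finset α) (t : α → Option ρ) (qo : ℕ) (q : ρ → ℕ)
    (i : α) (A : Finset α) (hiA : i ∉ A) :
    (oaChosen acc t qo q A).card ≤ (oaChosen acc t qo q (insert i A)).card :=
  oa_size_monotonic_general acc t qo q i A
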